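/- arXiv:2112.02645 — 4 statements merged into one kernel-verified Lean document; each statement's English description precedes it below -/
import Mathlib

section
/- Let D be a weighted oriented graph with underlying graph G and edge ideal I(D) in S = K[t_1,…,t_s]. Then I(D)² = I(D)^{(2)} if and only if the following two conditions hold: (i) every vertex of V⁺(D) is a sink, and (ii) G contains no triangle (G has no clique on 3 vertices). -/
open MvPolynomial Pointwise

/-- A weighted oriented graph `D` on vertices `t_1, …, t_s` (indexed by `Fin s`):
a set of directed edges with no loops such that for each unordered pair of vertices at
most one orientation occurs, together with a weight function `w : V(D) → ℕ₊` which
equals `1` on every source vertex (a vertex having only outgoing edges, i.e. no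
incoming edge). -/
structure WOGraph (s : ℕ) where
  E : Set (Fin s × Fin s)
  no_loops : ∀ i : Fin s, (i, i) ∉ E
  no_two_orientations : ∀ i j : Fin s, (i, j) ∈ E → (j, i) ∉ E
  w : Fin s → ℕ
  w_pos : ∀ i, 1 ≤ w i
  source_weight_one : ∀ i : Fin s, (∀ j, (j, i) ∉ E) → w i = 1

/-- A vertex of `D` is a sink if it has only incoming edges. -/
def WOGraph.IsSink {s : ℕ} (D : WOGraph s) (i : Fin s) : Prop := ∀ j, (i, j) ∉ D.E

/-- `V⁺(D)`: the set of vertices of weight greater than `1`. -/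
def WOGraph.Vplus {s : ℕ} (D : WOGraph s) : Set (Fin s) := { i | 1 < D.w i }

/-- The underlying simple graph `G` of `D`, with edges `{t_i, t_j}` for `(t_i,t_j) ∈ E(D)`. -/
def WOGraph.underlying {s : ℕ} (D : WOGraph s) : SimpleGraph (Fin s) :=
  SimpleGraph.fromRel (fun i j => (i, j) ∈ D.E)

/-- The edge ideal `I(D) = (t_i t_j^{w_j} : (t_i, t_j) ∈ E(D))` of `D`
in `S = K[t_1, …, t_s]`. -/
noncomputable def WOGraph.edgeIdeal {s : ℕ} (D : WOGraph s) (K : Type*) [Field K] :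
    Ideal (MvPolynomial (Fin s) K) :=
  Ideal.span { f | ∃ e ∈ D.E, f = X e.1 * X e.2 ^ D.w e.2 }

/-- The contraction `J S_p ∩ S` to `R` of the extension of an ideal `J` to the
localization of `R` at a prime ideal `p`. -/
noncomputable def contractAt {R : Type*} [CommRing R] (J p : Ideal R) (hp : p.IsPrime) :
    Ideal R :=
  letI := hp
  (J.map (algebraMap R (Localization.AtPrime p))).comap
    (algebraMap R (Localization.AtPrime p))

/-- The `n`-th symbolic power `I^{(n)} = ⋂_{i=1}^r (Iⁿ S_{p_i} ∩ S)`, the intersection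
being taken over the minimal primes `p_1, …, p_r` of `I`. -/
noncomputable def symbolicPower {R : Type*} [CommRing R] (I : Ideal R) (n : ℕ) : Ideal R :=
  ⨅ (p : Ideal R) (hp : p ∈ I.minimalPrimes), contractAt (I ^ n) p hp.1.1

/-!
Both sides are monomial ideals. The minimal primes of `I = I(D)` are the ideals `(t_i : i ∈ C)`
for the minimal vertex covers `C` of `G`, and contracting back from the localization at such a
prime turns the variables outside `C` into units. So `t^μ ∈ I^{(2)}` iff for every minimal vertex
cover `C` some product of two generators divides `t^μ` in the variables of `C`, and
`I² = I^{(2)}` becomes a statement about exponent vectors.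

A non-sink `b ∈ V⁺` lies on a path `a → b → c`, and `t_a t_b^{w_b} t_c^{w_c}` lies in `I^{(2)}`
but not in `I²`. Once every vertex of `V⁺` is a sink, the generators are `t_a^{w_a} t_b^{w_b}`
for the edges `ab` of `G`; then a triangle `xyz` gives the counterexample
`t_x^{w_x} t_y^{w_y} t_z^{w_z}`. If `G` is triangle-free and `μ` is not above two edge exponents,
the edges whose exponents lie below `μ` all pass through one vertex `v` with `μ_v < 2 w_v`, and a
minimal vertex cover inside `{x | μ_x < w_x} ∪ {v}` shows `t^μ ∉ I^{(2)}`.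
-/

theorem mem_contractAt_iff {R : Type*} [CommRing R] {J p : Ideal R} (hp : p.IsPrime) {f : R} :
    f ∈ contractAt J p hp ↔ ∃ u ∉ p, u * f ∈ J :=
  letI := hp
  IsLocalization.algebraMap_mem_map_algebraMap_iff p.primeCompl _ J f

theorem pow_le_symbolicPower {R : Type*} [CommRing R] (I : Ideal R) (n : ℕ) :
    I ^ n ≤ symbolicPower I n :=
  le_iInf₂ fun _ _ => Ideal.le_comap_map

namespace MvPolynomial

variable {σ R : Type*}

section CommSemiring

variable [CommSemiring R]

variable (R) in
noncomputable def monomialIdeal (B : Set (σ →₀ ℕ)) : Ideal (MvPolynomial σ R) :=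
  Ideal.span ((fun β => monomial β 1) '' B)

theorem mem_monomialIdeal {B : Set (σ →₀ ℕ)} {f : MvPolynomial σ R} :
    f ∈ monomialIdeal R B ↔ ∀ μ ∈ f.support, ∃ β ∈ B, β ≤ μ :=
  mem_ideal_span_monomial_image

theorem mem_support_monomial_one [Nontrivial R] {μ : σ →₀ ℕ} :
    μ ∈ (monomial μ (1 : R)).support := by
  classical
  rw [mem_support_iff, coeff_monomial, if_pos rfl]
  exact one_ne_zero

theorem monomialIdeal_mul (A B : Set (σ →₀ ℕ)) :
    monomialIdeal R A * monomialIdeal R B = monomialIdeal R (A + B) := by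
  rw [monomialIdeal, monomialIdeal, monomialIdeal, Ideal.span_mul_span]
  congr 1
  ext f
  simp only [Set.mem_mul, Set.mem_image]
  constructor
  · rintro ⟨_, ⟨α, hα, rfl⟩, _, ⟨β, hβ, rfl⟩, rfl⟩
    exact ⟨α + β, Set.add_mem_add hα hβ, by rw [monomial_mul, one_mul]⟩
  · rintro ⟨_, ⟨α, hα, β, hβ, rfl⟩, rfl⟩
    exact ⟨_, ⟨α, hα, rfl⟩, _, ⟨β, hβ, rfl⟩, by rw [monomial_mul, one_mul]⟩

theorem monomialIdeal_pow (B : Set (σ →₀ ℕ)) (n : ℕ) :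
    monomialIdeal R B ^ n = monomialIdeal R (n • B) := by
  induction n with
  | zero => simp [monomialIdeal, ← Set.singleton_zero, Ideal.one_eq_top]
  | succ n ih => rw [pow_succ, ih, monomialIdeal_mul, succ_nsmul]

theorem X_mem_span_X_image_iff [Nontrivial R] {C : Set σ} {i : σ} :
    (X i : MvPolynomial σ R) ∈ Ideal.span (X '' C) ↔ i ∈ C := by
  simp [mem_ideal_span_X_image, support_X, Finsupp.single_apply_ne_zero]

def IsTransversal (B : Set (σ →₀ ℕ)) (C : Set σ) : Prop :=
  ∀ β ∈ B, ∃ i ∈ C, β i ≠ 0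

theorem monomialIdeal_le_span_X_image_iff [Nontrivial R] {B : Set (σ →₀ ℕ)} {C : Set σ} :
    monomialIdeal R B ≤ Ideal.span (X '' C) ↔ IsTransversal B C := by
  classical
  rw [monomialIdeal, Ideal.span_le, Set.image_subset_iff]
  simp [Set.subset_def, IsTransversal, mem_ideal_span_X_image, support_monomial]

theorem _root_.Ideal.IsPrime.exists_X_mem_of_monomial_mem {p : Ideal (MvPolynomial σ R)}
    (hp : p.IsPrime) {β : σ →₀ ℕ} (h : monomial β (1 : R) ∈ p) : ∃ i, β i ≠ 0 ∧ X i ∈ p := by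
  rw [monomial_eq, C_1, one_mul, Finsupp.prod] at h
  obtain ⟨i, hi, hXi⟩ := hp.prod_mem_iff.1 h
  exact ⟨i, Finsupp.mem_support_iff.1 hi, hp.mem_of_pow_mem _ hXi⟩

def localizedExponents (C : Set σ) (B : Set (σ →₀ ℕ)) : Set (σ →₀ ℕ) :=
  {μ | ∃ β ∈ B, ∀ i ∈ C, β i ≤ μ i}

theorem mem_localizedExponents_of_le_add {C : Set σ} {B : Set (σ →₀ ℕ)} {β μ ρ : σ →₀ ℕ}
    (hβ : β ∈ B) (h : β ≤ μ + ρ) (hρ : ∀ i ∈ C, ρ i = 0) : μ ∈ localizedExponents C B :=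
  ⟨β, hβ, fun i hi => by simpa [hρ i hi] using Finsupp.le_def.1 h i⟩

theorem mem_monomialIdeal_localizedExponents {C : Set σ} {B : Set (σ →₀ ℕ)}
    {f : MvPolynomial σ R} :
    f ∈ monomialIdeal R (localizedExponents C B) ↔ ∀ μ ∈ f.support, μ ∈ localizedExponents C B := by
  rw [mem_monomialIdeal]
  refine forall₂_congr fun μ _ => ⟨?_, fun h => ⟨μ, h, le_rfl⟩⟩
  rintro ⟨ν, ⟨β, hβ, hβν⟩, hνμ⟩
  exact ⟨β, hβ, fun i hi => (hβν i hi).trans (hνμ i)⟩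

theorem add_mem_support_mul_of_forall_le [NoZeroDivisors R] {M : Type*}
    [AddCommMonoid M] [LinearOrder M] [IsOrderedCancelAddMonoid M] (Φ : (σ →₀ ℕ) →+ M)
    (hΦ : Function.Injective Φ) {u f : MvPolynomial σ R} {μ ν : σ →₀ ℕ} (hμ : μ ∈ u.support)
    (hν : ν ∈ f.support) (hμu : ∀ τ ∈ u.support, Φ μ ≤ Φ τ) (hνf : ∀ τ ∈ f.support, Φ ν ≤ Φ τ) :
    μ + ν ∈ (u * f).support := by
  have huniq : UniqueAdd u.support f.support μ ν := fun a b ha hb hab => by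
    have := (add_eq_add_iff_eq_and_eq (hμu a ha) (hνf b hb)).1 (by rw [← map_add, ← map_add, hab])
    exact ⟨hΦ this.1.symm, hΦ this.2.symm⟩
  rw [mem_support_iff, coeff, AddMonoidAlgebra.coeff_mul_add_of_uniqueAdd huniq]
  exact mul_ne_zero (mem_support_iff.1 hμ) (mem_support_iff.1 hν)

open scoped Classical in
/-- Ordering exponents by their degree in the variables of `C` first, a minimal monomial of a
polynomial outside `span (X '' C)` involves no variable of `C`; the lexicographic tie-break makes
the order total and compatible with addition. -/
noncomputable def degLexOn (C : Set σ) : (σ →₀ ℕ) →+ ℕ ×ₗ Lex (σ →₀ ℕ) where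
  toFun μ := toLex ((μ.filter (· ∈ C)).degree, toLex μ)
  map_zero' := by simp; rfl
  map_add' μ ν := by simp [Finsupp.filter_add]; rfl

theorem degLexOn_injective (C : Set σ) : Function.Injective (degLexOn C) :=
  fun μ ν h => by simpa [degLexOn] using congrArg (fun x => (ofLex x).2) h

theorem eq_zero_of_degLexOn_le [LinearOrder σ] {C : Set σ} {ρ τ : σ →₀ ℕ}
    (h : degLexOn C ρ ≤ degLexOn C τ) (hτ : ∀ i ∈ C, τ i = 0) : ∀ i ∈ C, ρ i = 0 := by
  classical
  have hdeg := Prod.Lex.monotone_fst _ _ h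
  simp only [degLexOn, AddMonoidHom.coe_mk, ZeroHom.coe_mk, ofLex_toLex] at hdeg
  rw [(Finsupp.filter_eq_zero_iff _ _).2 hτ, map_zero, Nat.le_zero, Finsupp.degree_eq_zero_iff,
    Finsupp.filter_eq_zero_iff] at hdeg
  convert hdeg

theorem exists_add_mem_support_mul [NoZeroDivisors R] {C : Set σ}
    {u f : MvPolynomial σ R} (hu : u ∉ Ideal.span (X '' C)) (hf : f ≠ 0) :
    ∃ ρ μ, (∀ i ∈ C, ρ i = 0) ∧ μ ∈ f.support ∧ ρ + μ ∈ (u * f).support := by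
  classical
  let := linearOrderOfSTO (WellOrderingRel (α := σ))
  have hu0 : u ≠ 0 := by rintro rfl; exact hu (zero_mem _)
  obtain ⟨τ, hτ, hτC⟩ : ∃ τ ∈ u.support, ∀ i ∈ C, τ i = 0 := by
    simpa [mem_ideal_span_X_image] using hu
  obtain ⟨ρ, hρ, hρmin⟩ := u.support.exists_min_image (degLexOn C) (support_nonempty.2 hu0)
  obtain ⟨μ, hμ, hμmin⟩ := f.support.exists_min_image (degLexOn C) (support_nonempty.2 hf)
  exact ⟨ρ, μ, eq_zero_of_degLexOn_le (hρmin τ hτ) hτC, hμ,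
    add_mem_support_mul_of_forall_le _ (degLexOn_injective C) hρ hμ hρmin hμmin⟩

end CommSemiring

section CommRing

variable [CommRing R]

theorem isPrime_span_X_image [IsDomain R] (C : Set σ) :
    (Ideal.span (X '' C) : Ideal (MvPolynomial σ R)).IsPrime := by
  classical
  let φ : MvPolynomial σ R →ₐ[R] MvPolynomial σ R := aeval fun i => if i ∈ C then 0 else X i
  suffices Ideal.span (X '' C) = RingHom.ker φ by rw [this]; exact RingHom.ker_isPrime _
  apply le_antisymm
  · rw [Ideal.span_le]
    rintro _ ⟨i, hi, rfl⟩
    simp [φ, hi]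
  · intro f hf
    have hφ : (Ideal.Quotient.mkₐ R (Ideal.span (X '' C))).comp φ = Ideal.Quotient.mkₐ R _ := by
      ext i
      by_cases hi : i ∈ C
      · simp only [φ, AlgHom.comp_apply, aeval_X, if_pos hi, map_zero, Ideal.Quotient.mkₐ_eq_mk]
        exact (Ideal.Quotient.eq_zero_iff_mem.2
          (Ideal.subset_span (Set.mem_image_of_mem X hi))).symm
      · simp [φ, hi]
    rw [← Ideal.Quotient.eq_zero_iff_mem, ← Ideal.Quotient.mkₐ_eq_mk R, ← hφ, AlgHom.comp_apply,
      RingHom.mem_ker.1 hf, map_zero]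

theorem minimalPrimes_monomialIdeal [IsDomain R] (B : Set (σ →₀ ℕ)) :
    (monomialIdeal R B).minimalPrimes =
      (fun C => (Ideal.span (X '' C) : Ideal (MvPolynomial σ R))) ''
        {C | Minimal (IsTransversal B) C} := by
  have over_prime : ∀ p : Ideal (MvPolynomial σ R), p.IsPrime → monomialIdeal R B ≤ p →
      IsTransversal B {i | X i ∈ p} ∧ Ideal.span (X '' {i | X i ∈ p}) ≤ p := by
    refine fun p hp hBp => ⟨fun β hβ => ?_, Ideal.span_le.2 (by rintro _ ⟨i, hi, rfl⟩; exact hi)⟩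
    obtain ⟨i, hi, hXi⟩ := hp.exists_X_mem_of_monomial_mem (hBp (Ideal.subset_span ⟨β, hβ, rfl⟩))
    exact ⟨i, hXi, hi⟩
  have prime_over : ∀ C, IsTransversal B C →
      (Ideal.span (X '' C) : Ideal (MvPolynomial σ R)).IsPrime ∧
        monomialIdeal R B ≤ Ideal.span (X '' C) :=
    fun C hC => ⟨isPrime_span_X_image C, monomialIdeal_le_span_X_image_iff.2 hC⟩
  ext p
  constructor
  · intro hp
    obtain ⟨hT, hle⟩ := over_prime p hp.1.1 hp.1.2
    have hpeq : Ideal.span (X '' {i | X i ∈ p}) = p := le_antisymm hle (hp.2 (prime_over _ hT) hle)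
    refine ⟨_, ⟨hT, fun C hC hCle i hi => ?_⟩, hpeq⟩
    have hpC := hp.2 (prime_over C hC) (hpeq ▸ Ideal.span_mono (Set.image_mono hCle))
    exact X_mem_span_X_image_iff.1 (hpC hi)
  · rintro ⟨C, hC, rfl⟩
    refine ⟨prime_over C hC.1, fun q hq hqC => ?_⟩
    obtain ⟨hT, hle⟩ := over_prime q hq.1 hq.2
    have hCq : C ≤ {i | X i ∈ q} := hC.2 hT fun i hi => X_mem_span_X_image_iff.1 (hqC hi)
    exact (Ideal.span_mono (Set.image_mono hCq)).trans hle

theorem mem_of_mul_mem_monomialIdeal_localizedExponents [NoZeroDivisors R]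
    {C : Set σ} {B : Set (σ →₀ ℕ)} {u f : MvPolynomial σ R} (hu : u ∉ Ideal.span (X '' C))
    (h : u * f ∈ monomialIdeal R (localizedExponents C B)) :
    f ∈ monomialIdeal R (localizedExponents C B) := by
  classical
  set A := localizedExponents C B
  set f' := ∑ μ ∈ f.support with μ ∉ A, monomial μ (coeff μ f)
  have hf'A : ∀ μ ∈ f'.support, μ ∉ A := fun μ hμ => by
    obtain ⟨ν, hν, hμν⟩ := Finset.mem_biUnion.1 (support_sum hμ)
    rw [Finset.mem_singleton.1 (support_monomial_subset hμν)]
    exact (Finset.mem_filter.1 hν).2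
  have hff' : f - f' ∈ monomialIdeal R A := by
    have : f - f' = ∑ μ ∈ f.support with μ ∈ A, monomial μ (coeff μ f) := by
      conv_lhs => rw [f.as_sum, ← Finset.sum_filter_add_sum_filter_not _ (· ∈ A)]
      simp [f']
    rw [this]
    refine Ideal.sum_mem _ fun μ hμ => ?_
    rw [← mul_one (coeff μ f), ← C_mul_monomial]
    exact Ideal.mul_mem_left _ _ (Ideal.subset_span ⟨μ, (Finset.mem_filter.1 hμ).2, rfl⟩ :
      monomial μ (1 : R) ∈ monomialIdeal R A)
  by_contra hf
  have hf' : f' ≠ 0 := fun h0 => hf (by simpa [h0] using hff')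
  have huf' : u * f' ∈ monomialIdeal R A := by
    simpa [mul_sub] using sub_mem h (Ideal.mul_mem_left _ u hff')
  obtain ⟨ρ, μ, hρ, hμ, hρμ⟩ := exists_add_mem_support_mul hu hf'
  obtain ⟨β, hβ, hβle⟩ := mem_monomialIdeal_localizedExponents.1 huf' _ hρμ
  exact hf'A μ hμ ⟨β, hβ, fun i hi => by simpa [hρ i hi] using hβle i hi⟩

theorem contractAt_monomialIdeal [IsDomain R] (B : Set (σ →₀ ℕ)) (C : Set σ)
    (hp : (Ideal.span (X '' C) : Ideal (MvPolynomial σ R)).IsPrime) :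
    contractAt (monomialIdeal R B) (Ideal.span (X '' C)) hp =
      monomialIdeal R (localizedExponents C B) := by
  apply le_antisymm
  · intro f hf
    obtain ⟨u, hu, huf⟩ := (mem_contractAt_iff hp).1 hf
    refine mem_of_mul_mem_monomialIdeal_localizedExponents hu ?_
    exact Ideal.span_mono (Set.image_mono fun β hβ =>
      (⟨β, hβ, fun _ _ => le_rfl⟩ : β ∈ localizedExponents C B)) huf
  · rw [monomialIdeal, Ideal.span_le]
    rintro _ ⟨μ, ⟨β, hβ, hβμ⟩, rfl⟩
    -- the cofactor `X ^ (β - μ)` involves no variable of `C`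
    refine (mem_contractAt_iff hp).2 ⟨monomial (β - μ) 1, ?_, ?_⟩
    · intro hmem
      obtain ⟨i, hi, hne⟩ := mem_ideal_span_X_image.1 hmem _ mem_support_monomial_one
      exact hne (tsub_eq_zero_of_le (hβμ i hi))
    · rw [monomial_mul, one_mul, mem_monomialIdeal]
      intro ν hν
      rw [Finset.mem_singleton.1 (support_monomial_subset hν)]
      exact ⟨β, hβ, le_tsub_add⟩

theorem mem_symbolicPower_monomialIdeal [IsDomain R] {B : Set (σ →₀ ℕ)} {n : ℕ}
    {f : MvPolynomial σ R} :
    f ∈ symbolicPower (monomialIdeal R B) n ↔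
      ∀ C, Minimal (IsTransversal B) C → ∀ μ ∈ f.support, μ ∈ localizedExponents C (n • B) := by
  simp only [symbolicPower, Submodule.mem_iInf]
  constructor
  · intro h C hC
    have hp : Ideal.span (X '' C) ∈ (monomialIdeal R B).minimalPrimes := by
      rw [minimalPrimes_monomialIdeal]
      exact ⟨C, hC, rfl⟩
    have := h _ hp
    rwa [monomialIdeal_pow, contractAt_monomialIdeal, mem_monomialIdeal_localizedExponents] at this
  · intro h p hp
    obtain ⟨C, hC, rfl⟩ : p ∈ _ := minimalPrimes_monomialIdeal (R := R) B ▸ hp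
    rw [monomialIdeal_pow, contractAt_monomialIdeal, mem_monomialIdeal_localizedExponents]
    exact h C hC

theorem monomialIdeal_pow_eq_symbolicPower_iff [IsDomain R] (B : Set (σ →₀ ℕ))
    (n : ℕ) :
    monomialIdeal R B ^ n = symbolicPower (monomialIdeal R B) n ↔
      ∀ μ, (∀ C, Minimal (IsTransversal B) C → μ ∈ localizedExponents C (n • B)) →
        ∃ β ∈ n • B, β ≤ μ := by
  rw [le_antisymm_iff, and_iff_right (pow_le_symbolicPower _ _)]
  constructor
  · intro h μ hμ
    have hmem : monomial μ (1 : R) ∈ symbolicPower (monomialIdeal R B) n :=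
      mem_symbolicPower_monomialIdeal.2 fun C hC ν hν => by
        rw [Finset.mem_singleton.1 (support_monomial_subset hν)]
        exact hμ C hC
    have := h hmem
    rw [monomialIdeal_pow, mem_monomialIdeal] at this
    exact this μ mem_support_monomial_one
  · intro h f hf
    rw [monomialIdeal_pow, mem_monomialIdeal]
    exact fun μ hμ => h μ fun C hC => mem_symbolicPower_monomialIdeal.1 hf C hC μ hμ

end CommRing

end MvPolynomial

noncomputable def pairExponent {V : Type*} (w : V → ℕ) (a b : V) : V →₀ ℕ :=
  Finsupp.single a (w a) + Finsupp.single b (w b)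

section pairExponent

variable {V : Type*} {w : V → ℕ} {a b x : V} {μ : V →₀ ℕ}

theorem pairExponent_comm (w : V → ℕ) (a b : V) : pairExponent w a b = pairExponent w b a :=
  add_comm _ _

theorem pairExponent_apply_of_mem (hab : a ≠ b) (hx : x = a ∨ x = b) :
    pairExponent w a b x = w x := by
  rcases hx with rfl | rfl <;> simp [pairExponent, hab, hab.symm]

theorem pairExponent_apply_of_ne (ha : x ≠ a) (hb : x ≠ b) : pairExponent w a b x = 0 := by
  simp [pairExponent, ha.symm, hb.symm]

theorem pairExponent_le_iff (hab : a ≠ b) : pairExponent w a b ≤ μ ↔ w a ≤ μ a ∧ w b ≤ μ b := by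
  refine ⟨fun h => ?_, fun h => Finsupp.le_def.2 fun x => ?_⟩
  · rw [← pairExponent_apply_of_mem (w := w) hab (Or.inl rfl),
      ← pairExponent_apply_of_mem (w := w) hab (Or.inr rfl)]
    exact ⟨Finsupp.le_def.1 h a, Finsupp.le_def.1 h b⟩
  · by_cases hx : x = a ∨ x = b
    · rw [pairExponent_apply_of_mem hab hx]
      rcases hx with rfl | rfl
      exacts [h.1, h.2]
    · rw [not_or] at hx
      rw [pairExponent_apply_of_ne hx.1 hx.2]
      exact zero_le

end pairExponent

namespace SimpleGraph

variable {V : Type*} {G : SimpleGraph V} {w : V → ℕ} {μ : V →₀ ℕ}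

variable (G w) in
def edgeExponents : Set (V →₀ ℕ) :=
  {β | ∃ a b, G.Adj a b ∧ β = pairExponent w a b}

theorem Adj.of_mem {a b x y : V} (hab : G.Adj a b) (hx : x = a ∨ x = b) (hy : y = a ∨ y = b)
    (hxy : x ≠ y) : G.Adj x y := by
  rcases hx with rfl | rfl <;> rcases hy with rfl | rfl
  exacts [absurd rfl hxy, hab, hab.symm, absurd rfl hxy]

theorem exists_adj_notMem_of_minimal_isVertexCover {C : Set V} (hC : Minimal G.IsVertexCover C)
    {v : V} (hv : v ∈ C) : ∃ t, G.Adj v t ∧ t ∉ C := by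
  by_contra! h
  have hcov : G.IsVertexCover (C \ {v}) := fun a b hab => by
    rcases hC.prop hab with ha | hb
    · by_cases hav : a = v
      · subst hav
        exact Or.inr ⟨h b hab, hab.ne.symm⟩
      · exact Or.inl ⟨ha, hav⟩
    · by_cases hbv : b = v
      · subst hbv
        exact Or.inl ⟨h a hab.symm, hab.ne⟩
      · exact Or.inr ⟨hb, hbv⟩
  exact (hC.2 hcov Set.sdiff_subset hv).2 rfl

theorem exists_common_of_not_add_le {a b c d : V} (hab : a ≠ b) (hcd : c ≠ d)
    (h₁ : pairExponent w a b ≤ μ) (h₂ : pairExponent w c d ≤ μ)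
    (h : ¬pairExponent w a b + pairExponent w c d ≤ μ) :
    ∃ v, (v = a ∨ v = b) ∧ (v = c ∨ v = d) ∧ μ v < 2 * w v := by
  obtain ⟨v, hv⟩ : ∃ v, μ v < pairExponent w a b v + pairExponent w c d v := by
    simpa [Finsupp.le_def] using h
  have h₁v := Finsupp.le_def.1 h₁ v
  have h₂v := Finsupp.le_def.1 h₂ v
  by_cases hvab : v = a ∨ v = b
  · by_cases hvcd : v = c ∨ v = d
    · rw [pairExponent_apply_of_mem hab hvab, pairExponent_apply_of_mem hcd hvcd] at hv
      exact ⟨v, hvab, hvcd, by omega⟩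
    · rw [not_or] at hvcd
      rw [pairExponent_apply_of_ne hvcd.1 hvcd.2] at hv
      omega
  · rw [not_or] at hvab
    rw [pairExponent_apply_of_ne hvab.1 hvab.2] at hv
    omega

theorem exists_star_center_of_adj (hG : G.CliqueFree 3)
    (hno : ∀ a b c d, G.Adj a b → G.Adj c d → ¬pairExponent w a b + pairExponent w c d ≤ μ)
    {a b : V} (hab : G.Adj a b) (hle : pairExponent w a b ≤ μ) (ha : μ a < 2 * w a) :
    ∃ v, μ v < 2 * w v ∧ ∀ c d, G.Adj c d → pairExponent w c d ≤ μ → v = c ∨ v = d := by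
  have through : ∀ {x y c d}, G.Adj x y → pairExponent w x y ≤ μ → G.Adj c d →
      pairExponent w c d ≤ μ → ¬(x = c ∨ x = d) → (y = c ∨ y = d) ∧ μ y < 2 * w y := by
    intro x y c d hxy hxyle hcd hcdle hx
    obtain ⟨v, hv, hvcd, hμv⟩ :=
      exists_common_of_not_add_le hxy.ne hcd.ne hxyle hcdle (hno x y c d hxy hcd)
    rcases hv with rfl | rfl
    exacts [absurd hvcd hx, ⟨hvcd, hμv⟩]
  by_cases hA : ∀ c d, G.Adj c d → pairExponent w c d ≤ μ → a = c ∨ a = d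
  · exact ⟨a, ha, hA⟩
  simp only [not_forall] at hA
  obtain ⟨c, d, hcd, hcdle, hacd⟩ := hA
  obtain ⟨hbcd, hb⟩ := through hab hle hcd hcdle hacd
  refine ⟨b, hb, fun e f hef hefle => ?_⟩
  by_contra hbef
  obtain ⟨haef, -⟩ := through hab.symm (pairExponent_comm w a b ▸ hle) hef hefle hbef
  obtain ⟨q, hqcd, hqef, -⟩ :=
    exists_common_of_not_add_le hcd.ne hef.ne hcdle hefle (hno c d e f hcd hef)
  have hqa : a ≠ q := fun h => hacd (h ▸ hqcd)
  have hqb : b ≠ q := fun h => hbef (h ▸ hqef)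
  classical
  exact hG {a, b, q}
    (is3Clique_triple_iff.2 ⟨hab, hef.of_mem haef hqef hqa, hcd.of_mem hbcd hqcd hqb⟩)

theorem exists_star_center (hG : G.CliqueFree 3)
    (hno : ∀ a b c d, G.Adj a b → G.Adj c d → ¬pairExponent w a b + pairExponent w c d ≤ μ)
    {a b : V} (hab : G.Adj a b) (hle : pairExponent w a b ≤ μ) :
    ∃ v, μ v < 2 * w v ∧ ∀ c d, G.Adj c d → pairExponent w c d ≤ μ → v = c ∨ v = d := by
  obtain ⟨v, hv, -, hμv⟩ :=
    exists_common_of_not_add_le hab.ne hab.ne hle hle (hno a b a b hab hab)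
  rcases hv with rfl | rfl
  · exact exists_star_center_of_adj hG hno hab hle hμv
  · exact exists_star_center_of_adj hG hno hab.symm (pairExponent_comm w a v ▸ hle) hμv

theorem exists_minimal_isVertexCover_notMem_localizedExponents [Finite V] {T : Set V}
    (hT : T.Subsingleton) (hTμ : ∀ v ∈ T, μ v < 2 * w v)
    (hcov : G.IsVertexCover ({x | μ x < w x} ∪ T)) :
    ∃ C, Minimal G.IsVertexCover C ∧
      μ ∉ localizedExponents C (G.edgeExponents w + G.edgeExponents w) := by
  obtain ⟨C, hCle, hC⟩ := exists_minimal_le_of_wellFoundedLT _ _ hcov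
  refine ⟨C, hC, ?_⟩
  rintro ⟨_, ⟨_, ⟨a, b, hab, rfl⟩, _, ⟨c, d, hcd, rfl⟩, rfl⟩, hle⟩
  simp only [Finsupp.add_apply] at hle
  have meets : ∀ {a b}, G.Adj a b → (∀ i ∈ C, pairExponent w a b i ≤ μ i) →
      ∃ v ∈ T, v ∈ C ∧ (v = a ∨ v = b) := by
    intro a b hab hle
    have inT : ∀ x ∈ C, (x = a ∨ x = b) → x ∈ T := fun x hx hxab =>
      (hCle hx).resolve_left fun hZ =>
        absurd (hle x hx) (by rw [pairExponent_apply_of_mem hab.ne hxab]; exact not_le.2 hZ)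
    rcases hC.prop hab with ha | hb
    exacts [⟨a, inT a ha (Or.inl rfl), ha, Or.inl rfl⟩, ⟨b, inT b hb (Or.inr rfl), hb, Or.inr rfl⟩]
  obtain ⟨v, hvT, hvC, hv⟩ := meets hab fun i hi => (Nat.le_add_right _ _).trans (hle i hi)
  obtain ⟨v', hv'T, -, hv'⟩ := meets hcd fun i hi => (Nat.le_add_left _ _).trans (hle i hi)
  obtain rfl := hT hvT hv'T
  have hμv := hle v hvC
  rw [pairExponent_apply_of_mem hab.ne hv, pairExponent_apply_of_mem hcd.ne hv'] at hμv
  have := hTμ v hvT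
  omega

theorem exists_add_le_of_cliqueFree [Finite V] (hG : G.CliqueFree 3)
    (H : ∀ C, Minimal G.IsVertexCover C →
      μ ∈ localizedExponents C (G.edgeExponents w + G.edgeExponents w)) :
    ∃ β ∈ G.edgeExponents w + G.edgeExponents w, β ≤ μ := by
  by_contra hno
  replace hno : ∀ a b c d, G.Adj a b → G.Adj c d →
      ¬pairExponent w a b + pairExponent w c d ≤ μ :=
    fun a b c d hab hcd h => hno ⟨_, ⟨_, ⟨a, b, hab, rfl⟩, _, ⟨c, d, hcd, rfl⟩, rfl⟩, h⟩
  have low : ∀ ⦃a b⦄, G.Adj a b → ¬pairExponent w a b ≤ μ →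
      a ∈ {x | μ x < w x} ∨ b ∈ {x | μ x < w x} := fun a b hab h => by
    rw [pairExponent_le_iff hab.ne] at h
    show μ a < w a ∨ μ b < w b
    omega
  obtain ⟨T, hT, hTμ, hcov⟩ : ∃ T : Set V, T.Subsingleton ∧ (∀ v ∈ T, μ v < 2 * w v) ∧
      G.IsVertexCover ({x | μ x < w x} ∪ T) := by
    by_cases hfit : ∃ a b, G.Adj a b ∧ pairExponent w a b ≤ μ
    · obtain ⟨a, b, hab, hle⟩ := hfit
      obtain ⟨v, hv, hcenter⟩ := exists_star_center hG hno hab hle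
      refine ⟨{v}, Set.subsingleton_singleton, by simpa using hv, fun c d hcd => ?_⟩
      by_cases h : pairExponent w c d ≤ μ
      · rcases hcenter c d hcd h with rfl | rfl <;> simp
      · exact (low hcd h).imp Or.inl Or.inl
    · refine ⟨∅, Set.subsingleton_empty, by simp, fun c d hcd => ?_⟩
      simpa using low hcd fun h => hfit ⟨c, d, hcd, h⟩
  obtain ⟨C, hC, hμC⟩ := exists_minimal_isVertexCover_notMem_localizedExponents hT hTμ hcov
  exact hμC (H C hC)

theorem mem_localizedExponents_of_triangle {x y z : V} (hxy : G.Adj x y) (hxz : G.Adj x z)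
    (hyz : G.Adj y z) {C : Set V} (hC : Minimal G.IsVertexCover C) :
    Finsupp.single x (w x) + Finsupp.single y (w y) + Finsupp.single z (w z) ∈
      localizedExponents C (G.edgeExponents w + G.edgeExponents w) := by
  set μ := Finsupp.single x (w x) + Finsupp.single y (w y) + Finsupp.single z (w z) with hμdef
  -- two triangle edges, or a triangle edge and an edge leaving `C`, add up to `μ` plus a
  -- term outside `C`
  have fits : ∀ {a b c d t}, G.Adj a b → G.Adj c d →
      pairExponent w a b + pairExponent w c d = μ + Finsupp.single t (w t) → t ∉ C →
      μ ∈ localizedExponents C (G.edgeExponents w + G.edgeExponents w) :=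
    fun hab hcd h ht => mem_localizedExponents_of_le_add
      (Set.add_mem_add ⟨_, _, hab, rfl⟩ ⟨_, _, hcd, rfl⟩) h.le
      fun i hi => Finsupp.single_eq_of_ne (ne_of_mem_of_not_mem hi ht)
  by_cases hx : x ∈ C
  · by_cases hy : y ∈ C
    · by_cases hz : z ∈ C
      · obtain ⟨t, hzt, ht⟩ := exists_adj_notMem_of_minimal_isVertexCover hC hz
        exact fits hzt hxy (by simp only [pairExponent, hμdef]; abel) ht
      · exact fits hxz hyz (by simp only [pairExponent, hμdef]; abel) hz
    · exact fits hxy hyz (by simp only [pairExponent, hμdef]; abel) hy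
  · exact fits hxy hxz (by simp only [pairExponent, hμdef]; abel) hx

theorem not_exists_le_of_triangle (hw : ∀ v, 0 < w v) {x y z : V} (hxy : G.Adj x y)
    (hxz : G.Adj x z) (hyz : G.Adj y z) :
    ¬∃ β ∈ G.edgeExponents w + G.edgeExponents w,
      β ≤ Finsupp.single x (w x) + Finsupp.single y (w y) + Finsupp.single z (w z) := by
  classical
  set μ := Finsupp.single x (w x) + Finsupp.single y (w y) + Finsupp.single z (w z) with hμdef
  have hμ : ∀ v, μ v = if v = x ∨ v = y ∨ v = z then w v else 0 := fun v => by
    simp only [hμdef, Finsupp.add_apply, Finsupp.single_apply]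
    have := hxy.ne; have := hxz.ne; have := hyz.ne
    grind
  rintro ⟨_, ⟨_, ⟨a, b, hab, rfl⟩, _, ⟨c, d, hcd, rfl⟩, rfl⟩, hle⟩
  have fit : ∀ v, pairExponent w a b v + pairExponent w c d v ≤ μ v := Finsupp.le_def.1 hle
  -- both edges lie in the triangle and are disjoint, which is impossible
  have inside : ∀ {a b v}, G.Adj a b → pairExponent w a b v ≤ μ v → (v = a ∨ v = b) →
      v = x ∨ v = y ∨ v = z := by
    intro a b v hab hv hvab
    rw [pairExponent_apply_of_mem hab.ne hvab, hμ] at hv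
    have := hw v
    split_ifs at hv with h
    exacts [h, by omega]
  have disjoint : ∀ v, (v = a ∨ v = b) → ¬(v = c ∨ v = d) := fun v hvab hvcd => by
    have hv := fit v
    rw [pairExponent_apply_of_mem hab.ne hvab, pairExponent_apply_of_mem hcd.ne hvcd, hμ] at hv
    have := hw v
    split_ifs at hv <;> omega
  have ha := inside hab ((Nat.le_add_right _ _).trans (fit a)) (Or.inl rfl)
  have hb := inside hab ((Nat.le_add_right _ _).trans (fit b)) (Or.inr rfl)
  have hc := inside hcd ((Nat.le_add_left _ _).trans (fit c)) (Or.inl rfl)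
  have hd := inside hcd ((Nat.le_add_left _ _).trans (fit d)) (Or.inr rfl)
  have := hab.ne; have := hcd.ne
  grind

theorem exists_counterexample_of_not_cliqueFree (hw : ∀ v, 0 < w v) (hG : ¬G.CliqueFree 3) :
    ∃ μ : V →₀ ℕ, (∀ C, Minimal G.IsVertexCover C →
      μ ∈ localizedExponents C (G.edgeExponents w + G.edgeExponents w)) ∧
      ¬∃ β ∈ G.edgeExponents w + G.edgeExponents w, β ≤ μ := by
  classical
  obtain ⟨_, ht⟩ := not_forall_not.1 hG
  obtain ⟨x, y, z, hxy, hxz, hyz, -⟩ := is3Clique_iff.1 ht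
  exact ⟨_, fun C hC => mem_localizedExponents_of_triangle hxy hxz hyz hC,
    not_exists_le_of_triangle hw hxy hxz hyz⟩

end SimpleGraph

namespace WOGraph

variable {s : ℕ} (D : WOGraph s)

noncomputable def edgeExponent (e : Fin s × Fin s) : Fin s →₀ ℕ :=
  Finsupp.single e.1 1 + Finsupp.single e.2 (D.w e.2)

theorem edgeIdeal_eq_monomialIdeal (K : Type*) [Field K] :
    D.edgeIdeal K = monomialIdeal K (D.edgeExponent '' D.E) := by
  have hmon : ∀ e, monomial (D.edgeExponent e) (1 : K) = X e.1 * X e.2 ^ D.w e.2 := fun e => by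
    rw [X_pow_eq_monomial, X, monomial_mul, one_mul, edgeExponent]
  rw [edgeIdeal, monomialIdeal, Set.image_image]
  congr 1
  ext f
  simp only [Set.mem_ofPred_eq, Set.mem_image, hmon, eq_comm]

variable {D}

theorem adj_of_mem {e : Fin s × Fin s} (he : e ∈ D.E) : D.underlying.Adj e.1 e.2 :=
  (SimpleGraph.fromRel_adj _ _ _).2
    ⟨fun h => D.no_loops e.1 (by rwa [show (e.1, e.1) = e from Prod.ext rfl h]), Or.inl he⟩

theorem mem_or_mem_of_adj {a b : Fin s} (hab : D.underlying.Adj a b) :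
    (a, b) ∈ D.E ∨ (b, a) ∈ D.E :=
  ((SimpleGraph.fromRel_adj _ _ _).1 hab).2

theorem edgeExponent_apply_ne_zero_iff {e : Fin s × Fin s} {i : Fin s} :
    D.edgeExponent e i ≠ 0 ↔ i = e.1 ∨ i = e.2 := by
  have := D.w_pos e.2
  simp only [edgeExponent, Finsupp.add_apply, Finsupp.single_apply]
  grind

variable (D) in
theorem isTransversal_edgeExponent_image :
    IsTransversal (D.edgeExponent '' D.E) = D.underlying.IsVertexCover := by
  ext C
  simp only [IsTransversal, Set.forall_mem_image, edgeExponent_apply_ne_zero_iff]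
  constructor
  · intro h a b hab
    rcases mem_or_mem_of_adj hab with he | he
    · obtain ⟨i, hi, rfl | rfl⟩ := h he
      exacts [Or.inl hi, Or.inr hi]
    · obtain ⟨i, hi, rfl | rfl⟩ := h he
      exacts [Or.inr hi, Or.inl hi]
  · intro h e he
    rcases h (adj_of_mem he) with h1 | h2
    exacts [⟨e.1, h1, Or.inl rfl⟩, ⟨e.2, h2, Or.inr rfl⟩]

theorem w_eq_one_of_mem (hsink : ∀ i ∈ D.Vplus, D.IsSink i) {i j : Fin s} (h : (i, j) ∈ D.E) :
    D.w i = 1 :=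
  le_antisymm (not_lt.1 fun hi => hsink i hi j h) (D.w_pos i)

theorem edgeExponent_image_eq_edgeExponents (hsink : ∀ i ∈ D.Vplus, D.IsSink i) :
    D.edgeExponent '' D.E = D.underlying.edgeExponents D.w := by
  have heq : ∀ {a b}, (a, b) ∈ D.E → D.edgeExponent (a, b) = pairExponent D.w a b := fun h => by
    rw [edgeExponent, pairExponent, w_eq_one_of_mem hsink h]
  ext β
  constructor
  · rintro ⟨e, he, rfl⟩
    exact ⟨e.1, e.2, adj_of_mem he, heq he⟩
  · rintro ⟨a, b, hab, rfl⟩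
    rcases mem_or_mem_of_adj hab with h | h
    exacts [⟨_, h, heq h⟩, ⟨_, h, (heq h).trans (pairExponent_comm _ _ _)⟩]

theorem exists_edgeExponent_le_of_adj {u v : Fin s} (huv : D.underlying.Adj u v) :
    ∃ e ∈ D.E, D.edgeExponent e ≤ pairExponent D.w u v := by
  rcases mem_or_mem_of_adj huv with h | h
  · exact ⟨_, h, add_le_add_left (Finsupp.single_le_single.2 (D.w_pos u)) _⟩
  · refine ⟨_, h, ?_⟩
    rw [pairExponent_comm]
    exact add_le_add_left (Finsupp.single_le_single.2 (D.w_pos v)) _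

theorem mem_localizedExponents_of_path {a b c : Fin s} (hab : (a, b) ∈ D.E) (hbc : (b, c) ∈ D.E)
    (hwb : 2 ≤ D.w b) {C : Set (Fin s)} (hC : Minimal D.underlying.IsVertexCover C) :
    Finsupp.single a 1 + Finsupp.single b (D.w b) + Finsupp.single c (D.w c) ∈
      localizedExponents C (D.edgeExponent '' D.E + D.edgeExponent '' D.E) := by
  classical
  set μ := Finsupp.single a 1 + Finsupp.single b (D.w b) + Finsupp.single c (D.w c) with hμdef
  have fits : ∀ {e f ρ}, e ∈ D.E → f ∈ D.E → D.edgeExponent e + D.edgeExponent f ≤ μ + ρ →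
      (∀ i ∈ C, ρ i = 0) →
      μ ∈ localizedExponents C (D.edgeExponent '' D.E + D.edgeExponent '' D.E) :=
    fun he hf h hρ => mem_localizedExponents_of_le_add
      (Set.add_mem_add ⟨_, he, rfl⟩ ⟨_, hf, rfl⟩) h hρ
  have off : ∀ {t k}, t ∉ C → ∀ i ∈ C, Finsupp.single t k i = 0 :=
    fun ht i hi => Finsupp.single_eq_of_ne (ne_of_mem_of_not_mem hi ht)
  by_cases hc : c ∈ C
  · by_cases hbC : b ∈ C
    · obtain ⟨t, hbt, ht⟩ := SimpleGraph.exists_adj_notMem_of_minimal_isVertexCover hC hbC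
      rcases mem_or_mem_of_adj hbt with hbt' | htb
      · refine fits hbt' hbt' (ρ := Finsupp.single t (D.w t) + Finsupp.single t (D.w t))
          (Finsupp.le_def.2 fun i => ?_) fun i hi => by simp [off ht i hi]
        simp only [edgeExponent, hμdef, Finsupp.add_apply, Finsupp.single_apply]
        grind
      · obtain ⟨t', hct', ht'⟩ := SimpleGraph.exists_adj_notMem_of_minimal_isVertexCover hC hc
        obtain ⟨g, hg, hgle⟩ := exists_edgeExponent_le_of_adj hct'
        refine fits htb hg (ρ := Finsupp.single t 1 + Finsupp.single t' (D.w t'))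
          (Finsupp.le_def.2 fun i => ?_) fun i hi => by simp [off ht i hi, off ht' i hi]
        have := Finsupp.le_def.1 hgle i
        simp only [edgeExponent, pairExponent, hμdef, Finsupp.add_apply,
          Finsupp.single_apply] at this ⊢
        grind
    · exact fits hab hbc (ρ := Finsupp.single b 1)
        (le_of_eq (by simp only [edgeExponent, hμdef]; abel)) (off hbC)
  · refine fits hbc hbc (ρ := Finsupp.single c (D.w c)) (Finsupp.le_def.2 fun i => ?_) (off hc)
    simp only [edgeExponent, hμdef, Finsupp.add_apply, Finsupp.single_apply]
    grind

theorem not_exists_le_of_path {a b c : Fin s} (hab : (a, b) ∈ D.E) (hbc : (b, c) ∈ D.E) :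
    ¬∃ β ∈ D.edgeExponent '' D.E + D.edgeExponent '' D.E,
      β ≤ Finsupp.single a 1 + Finsupp.single b (D.w b) + Finsupp.single c (D.w c) := by
  classical
  set μ := Finsupp.single a 1 + Finsupp.single b (D.w b) + Finsupp.single c (D.w c) with hμdef
  rintro ⟨_, ⟨_, ⟨⟨p, q⟩, he, rfl⟩, _, ⟨⟨p', q'⟩, hf, rfl⟩, rfl⟩, hle⟩
  have fit : ∀ i, D.edgeExponent (p, q) i + D.edgeExponent (p', q') i ≤ μ i :=
    Finsupp.le_def.1 hle
  have hμ : ∀ i, μ i ≠ 0 → i = a ∨ i = b ∨ i = c := fun i hi => by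
    simp only [hμdef, Finsupp.add_apply, Finsupp.single_apply] at hi
    grind
  have inside : ∀ {e i}, D.edgeExponent e i ≤ μ i → (i = e.1 ∨ i = e.2) →
      i = a ∨ i = b ∨ i = c := fun hi hie =>
    hμ _ fun h0 => edgeExponent_apply_ne_zero_iff.2 hie (Nat.le_zero.1 (h0 ▸ hi))
  have hp := inside ((Nat.le_add_right _ _).trans (fit p)) (Or.inl rfl)
  have hq := inside ((Nat.le_add_right _ _).trans (fit q)) (Or.inr rfl)
  have hp' := inside ((Nat.le_add_left _ _).trans (fit p')) (Or.inl rfl)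
  have hq' := inside ((Nat.le_add_left _ _).trans (fit q')) (Or.inr rfl)
  have hpq := (adj_of_mem he).ne
  have hpq' := (adj_of_mem hf).ne
  have hba := D.no_two_orientations a b hab
  have hcb := D.no_two_orientations b c hbc
  have hac : a ≠ c := by rintro rfl; exact hba hbc
  have hwa := fit a
  have hwb := fit b
  have hwc := fit c
  simp only [edgeExponent, hμdef, Finsupp.add_apply, Finsupp.single_apply] at hwa hwb hwc
  have := D.w_pos
  grind

theorem exists_counterexample_of_not_isSink {b : Fin s} (hb : b ∈ D.Vplus) (hb' : ¬D.IsSink b) :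
    ∃ μ : Fin s →₀ ℕ, (∀ C, Minimal D.underlying.IsVertexCover C →
      μ ∈ localizedExponents C (D.edgeExponent '' D.E + D.edgeExponent '' D.E)) ∧
      ¬∃ β ∈ D.edgeExponent '' D.E + D.edgeExponent '' D.E, β ≤ μ := by
  obtain ⟨c, hbc⟩ : ∃ c, (b, c) ∈ D.E := by simpa [IsSink] using hb'
  obtain ⟨a, hab⟩ : ∃ a, (a, b) ∈ D.E := by
    by_contra! h
    exact absurd hb (by simp [Vplus, D.source_weight_one b h])
  exact ⟨_, fun C hC => mem_localizedExponents_of_path hab hbc hb hC, not_exists_le_of_path hab hbc⟩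

end WOGraph

/-- **Theorem (I² = I⁽²⁾).** For a weighted oriented graph `D` with underlying graph `G`,
`I(D)² = I(D)^{(2)}` if and only if every vertex of `V⁺(D)` is a sink and `G` has no
triangles (no clique on 3 vertices). -/
theorem edgeIdeal_sq_eq_symbolicPower_two_iff {s : ℕ} (K : Type*) [Field K]
    (D : WOGraph s) :
    D.edgeIdeal K ^ 2 = symbolicPower (D.edgeIdeal K) 2 ↔
      ((∀ i ∈ D.Vplus, D.IsSink i) ∧ D.underlying.CliqueFree 3) := by
  rw [D.edgeIdeal_eq_monomialIdeal, monomialIdeal_pow_eq_symbolicPower_iff, two_nsmul,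
    D.isTransversal_edgeExponent_image]
  constructor
  · intro h
    have hsink : ∀ i ∈ D.Vplus, D.IsSink i := fun i hi => by
      by_contra hi'
      obtain ⟨μ, hμ, hμ'⟩ := D.exists_counterexample_of_not_isSink hi hi'
      exact hμ' (h μ hμ)
    refine ⟨hsink, by_contra fun hG => ?_⟩
    rw [D.edgeExponent_image_eq_edgeExponents hsink] at h
    obtain ⟨μ, hμ, hμ'⟩ := SimpleGraph.exists_counterexample_of_not_cliqueFree D.w_pos hG
    exact hμ' (h μ hμ)
  · rintro ⟨hsink, hG⟩ μ hμ
    rw [D.edgeExponent_image_eq_edgeExponents hsink] at hμ ⊢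
    exact SimpleGraph.exists_add_le_of_cliqueFree hG hμ
end

section
/- Let D be a weighted oriented graph with edge ideal I(D) and let I(D) = q_1 ∩ ⋯ ∩ q_m be the (unique irredundant) irreducible decomposition of I(D) into irreducible monomial ideals. If some vertex v ∈ V⁺(D) is neither a source nor a sink (i.e., v has both an incoming and an outgoing edge), then ⋂_{i=1}^m q_i² is not contained in I(D)². -/
open MvPolynomial Pointwise

/-- For `b ∈ ℕ^s \ {0}`, the irreducible monomial ideal
`q_b = ({t_i^{b_i} : b_i ≥ 1})`. -/
noncomputable def irredIdeal (K : Type*) [Field K] {s : ℕ} (b : Fin s → ℕ) :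
    Ideal (MvPolynomial (Fin s) K) :=
  Ideal.span { f | ∃ i : Fin s, 1 ≤ b i ∧ f = X i ^ b i }

/-! Let `(u, v)` and `(v, x)` be edges and `f = t_u t_v^{w_v} t_x^{w_x}`. Every component `q` of
`I(D)` contains both edge monomials, and an irreducible monomial ideal containing a product of
coprime monomials contains one of them. So either `t_v ∈ q`, and `t_v² ∣ f` because `w_v ≥ 2`,
or `t_x^{w_x} ∈ q` together with `t_u` or `t_v^{w_v}`; in each case `f ∈ q²`. On the other hand
no product of two edge monomials divides `f`, so `f ∉ I(D)²`. -/

namespace MvPolynomial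

variable {σ R : Type*} [CommSemiring R]

theorem span_monomial_mul_span_monomial (S T : Set (σ →₀ ℕ)) :
    Ideal.span ((monomial · (1 : R)) '' S) * Ideal.span ((monomial · (1 : R)) '' T) =
      Ideal.span ((monomial · (1 : R)) '' (S + T)) := by
  rw [Ideal.span_mul_span', ← Set.image2_add, ← Set.image2_mul, Set.image_image2_distrib]
  intro a b
  rw [monomial_mul, one_mul]

theorem monomial_one_mem_span_monomial_iff [Nontrivial R] {S : Set (σ →₀ ℕ)} {d : σ →₀ ℕ} :
    monomial d (1 : R) ∈ Ideal.span ((monomial · (1 : R)) '' S) ↔ ∃ s ∈ S, s ≤ d := by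
  classical
  rw [mem_ideal_span_monomial_image, support_monomial, if_neg one_ne_zero]
  simp

theorem X_mul_X_pow_eq_monomial (a c : σ) (n : ℕ) :
    (X a * X c ^ n : MvPolynomial σ R) =
      monomial (Finsupp.single a 1 + Finsupp.single c n) 1 := by
  rw [X_pow_eq_monomial, X, monomial_mul, one_mul]

end MvPolynomial

theorem Ideal.mul_pow_mul_mem_sq {R : Type*} [CommSemiring R] {q : Ideal R} {p r z : R}
    {n : ℕ} (hn : 2 ≤ n) (hpr : p ∈ q ∨ r ^ n ∈ q) (hrz : r ∈ q ∨ z ∈ q) :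
    p * r ^ n * z ∈ q ^ 2 := by
  have mem_of_mul_dvd {a b : R} (ha : a ∈ q) (hb : b ∈ q) (hab : a * b ∣ p * r ^ n * z) :
      p * r ^ n * z ∈ q ^ 2 :=
    Ideal.mem_of_dvd _ hab (sq q ▸ Ideal.mul_mem_mul ha hb)
  rcases hrz with hr | hz
  · refine mem_of_mul_dvd hr hr (Dvd.dvd.mul_right (Dvd.dvd.mul_left ?_ p) z)
    exact (sq r).symm ▸ pow_dvd_pow r hn
  rcases hpr with hp | hrn
  · exact mem_of_mul_dvd hp hz (mul_dvd_mul (dvd_mul_right p _) dvd_rfl)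
  · exact mem_of_mul_dvd hrn hz (mul_dvd_mul (dvd_mul_left _ p) dvd_rfl)

section IrreducibleIdeal

variable {K : Type*} [Field K] {s : ℕ}

theorem irredIdeal_eq_span_monomial (b : Fin s → ℕ) :
    irredIdeal K b = Ideal.span ((monomial · (1 : K)) ''
      ((fun i => Finsupp.single i (b i)) '' {i | 1 ≤ b i})) := by
  rw [irredIdeal, Set.image_image]
  congr 1
  ext f
  simp [X_pow_eq_monomial, eq_comm]

theorem monomial_mem_irredIdeal_iff {b : Fin s → ℕ} {d : Fin s →₀ ℕ} :
    monomial d (1 : K) ∈ irredIdeal K b ↔ ∃ i, 1 ≤ b i ∧ b i ≤ d i := by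
  simp [irredIdeal_eq_span_monomial, monomial_one_mem_span_monomial_iff, Finsupp.single_le_iff]

theorem monomial_mem_irredIdeal_or_of_add_mem {b : Fin s → ℕ} {d e : Fin s →₀ ℕ}
    (hde : Disjoint d.support e.support) (h : monomial (d + e) (1 : K) ∈ irredIdeal K b) :
    monomial d (1 : K) ∈ irredIdeal K b ∨ monomial e (1 : K) ∈ irredIdeal K b := by
  obtain ⟨i, hbi, hi⟩ := monomial_mem_irredIdeal_iff.mp h
  simp only [monomial_mem_irredIdeal_iff]
  by_cases hdi : d i = 0
  · exact Or.inr ⟨i, hbi, by simpa [hdi] using hi⟩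
  · have hei : e i = 0 := Finsupp.notMem_support_iff.mp <|
      Finset.disjoint_left.mp hde (Finsupp.mem_support_iff.mpr hdi)
    exact Or.inl ⟨i, hbi, by simpa [hei] using hi⟩

theorem X_mem_or_X_pow_mem_irredIdeal {b : Fin s → ℕ} {a c : Fin s} {n : ℕ} (hac : a ≠ c)
    (h : X a * X c ^ n ∈ irredIdeal K b) : X a ∈ irredIdeal K b ∨ X c ^ n ∈ irredIdeal K b := by
  rw [X_mul_X_pow_eq_monomial] at h
  rw [X, X_pow_eq_monomial]
  exact monomial_mem_irredIdeal_or_of_add_mem (Disjoint.mono Finsupp.support_single_subset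
    Finsupp.support_single_subset (Finset.disjoint_singleton.mpr hac)) h

end IrreducibleIdeal

namespace WOGraph

variable {s : ℕ} (D : WOGraph s)

theorem ne_of_mem_E {a c : Fin s} (h : (a, c) ∈ D.E) : a ≠ c :=
  fun hac => D.no_loops a (hac ▸ h)

theorem one_le_edgeExponent_apply_fst (a c : Fin s) : 1 ≤ D.edgeExponent (a, c) a := by
  simp [edgeExponent]

theorem w_le_edgeExponent_apply_snd (a c : Fin s) : D.w c ≤ D.edgeExponent (a, c) c := by
  simp [edgeExponent]

theorem edgeExponent_apply_eq_zero_iff {e : Fin s × Fin s} {y : Fin s} :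
    D.edgeExponent e y = 0 ↔ e.1 ≠ y ∧ e.2 ≠ y := by
  have := D.w_pos e.2
  simp only [edgeExponent, Finsupp.add_apply, Finsupp.single_apply]
  split_ifs <;> grind

theorem edgeExponent_apply_snd_eq_zero_of_add_le {d : Fin s →₀ ℕ} (hd : ∀ y, d y ≤ D.w y)
    {a c : Fin s} {e' : Fin s × Fin s} (h : D.edgeExponent (a, c) + D.edgeExponent e' ≤ d) :
    D.edgeExponent e' c = 0 := by
  have := h c
  have := hd c
  have := D.w_le_edgeExponent_apply_snd a c
  simp only [Finsupp.add_apply] at *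
  omega

/- Write `d` for the exponent of `t_u t_v^{w_v} t_x^{w_x}`; then `d ≤ w`, so the head of each
edge exhausts the exponent of `d` there. Hence the two heads differ and both tails avoid them,
so both tails are the third vertex of `{u, v, x}`. It is not `u`, as `d u = 1`, and the other
two choices give an edge `(v, u)` or `(x, v)`, against the orientation. -/
theorem not_edgeExponent_add_le {u v x : Fin s} (hu : (u, v) ∈ D.E) (hx : (v, x) ∈ D.E)
    {a c a' c' : Fin s} (he : (a, c) ∈ D.E) (he' : (a', c') ∈ D.E) :
    ¬ D.edgeExponent (a, c) + D.edgeExponent (a', c') ≤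
      Finsupp.single u 1 + Finsupp.single v (D.w v) + Finsupp.single x (D.w x) := by
  set d := Finsupp.single u 1 + Finsupp.single v (D.w v) + Finsupp.single x (D.w x)
  have huv := D.ne_of_mem_E hu
  have hvx := D.ne_of_mem_E hx
  have hux : u ≠ x := fun h => D.no_two_orientations v x hx (h ▸ hu)
  have hd_le_w (y : Fin s) : d y ≤ D.w y := by
    have := D.w_pos u
    simp only [d, Finsupp.add_apply, Finsupp.single_apply]
    split_ifs <;> grind
  have hd_support (y : Fin s) (hy : d y ≠ 0) : y = u ∨ y = v ∨ y = x := by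
    simp only [d, Finsupp.add_apply, Finsupp.single_apply] at hy
    split_ifs at hy <;> grind
  have hdu : d u = 1 := by simp [d, huv, hux]
  intro h
  have hle (y : Fin s) : D.edgeExponent (a, c) y + D.edgeExponent (a', c') y ≤ d y := h y
  have hvert (y : Fin s) (hy : 1 ≤ D.edgeExponent (a, c) y + D.edgeExponent (a', c') y) :
      y = u ∨ y = v ∨ y = x :=
    hd_support y (by have := hle y; omega)
  have ha := hvert a (by have := D.one_le_edgeExponent_apply_fst a c; omega)
  have hc := hvert c (by have := D.w_le_edgeExponent_apply_snd a c; have := D.w_pos c; omega)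
  have ha' := hvert a' (by have := D.one_le_edgeExponent_apply_fst a' c'; omega)
  have hc' := hvert c'
    (by have := D.w_le_edgeExponent_apply_snd a' c'; have := D.w_pos c'; omega)
  have hhead := D.edgeExponent_apply_eq_zero_iff.mp
    (D.edgeExponent_apply_snd_eq_zero_of_add_le hd_le_w h)
  have hhead' := D.edgeExponent_apply_eq_zero_iff.mp
    (D.edgeExponent_apply_snd_eq_zero_of_add_le hd_le_w (by rwa [add_comm]))
  have htail (haa' : a = a') : a ≠ u := by
    subst haa'
    rintro rfl
    have := hle a
    have := D.one_le_edgeExponent_apply_fst a c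
    have := D.one_le_edgeExponent_apply_fst a c'
    omega
  have := D.ne_of_mem_E he
  have := D.ne_of_mem_E he'
  have := D.no_two_orientations _ _ hu
  have := D.no_two_orientations _ _ hx
  grind

variable (K : Type*) [Field K]

theorem edgeIdeal_eq_span_monomial :
    D.edgeIdeal K = Ideal.span ((monomial · (1 : K)) '' (D.edgeExponent '' D.E)) := by
  rw [edgeIdeal, Set.image_image]
  congr 1
  ext f
  simp [edgeExponent, X_mul_X_pow_eq_monomial, eq_comm]

theorem X_mul_X_pow_mem_edgeIdeal {a c : Fin s} (h : (a, c) ∈ D.E) :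
    X a * X c ^ D.w c ∈ D.edgeIdeal K :=
  Ideal.subset_span ⟨_, h, rfl⟩

theorem monomial_mem_edgeIdeal_sq_iff {d : Fin s →₀ ℕ} :
    monomial d (1 : K) ∈ D.edgeIdeal K ^ 2 ↔
      ∃ e ∈ D.E, ∃ e' ∈ D.E, D.edgeExponent e + D.edgeExponent e' ≤ d := by
  rw [edgeIdeal_eq_span_monomial, sq, span_monomial_mul_span_monomial,
    monomial_one_mem_span_monomial_iff]
  constructor
  · rintro ⟨_, ⟨_, ⟨e, he, rfl⟩, _, ⟨e', he', rfl⟩, rfl⟩, hle⟩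
    exact ⟨e, he, e', he', hle⟩
  · rintro ⟨e, he, e', he', hle⟩
    exact ⟨_, Set.add_mem_add (Set.mem_image_of_mem _ he) (Set.mem_image_of_mem _ he'), hle⟩

theorem X_mul_X_pow_mul_X_pow_mem_irredIdeal_sq {b : Fin s → ℕ}
    (hb : D.edgeIdeal K ≤ irredIdeal K b) {u v x : Fin s} (hu : (u, v) ∈ D.E)
    (hx : (v, x) ∈ D.E) (hv : v ∈ D.Vplus) :
    X u * X v ^ D.w v * X x ^ D.w x ∈ irredIdeal K b ^ 2 :=
  Ideal.mul_pow_mul_mem_sq hv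
    (X_mem_or_X_pow_mem_irredIdeal (D.ne_of_mem_E hu) (hb (D.X_mul_X_pow_mem_edgeIdeal K hu)))
    (X_mem_or_X_pow_mem_irredIdeal (D.ne_of_mem_E hx) (hb (D.X_mul_X_pow_mem_edgeIdeal K hx)))

theorem X_mul_X_pow_mul_X_pow_notMem_edgeIdeal_sq {u v x : Fin s} (hu : (u, v) ∈ D.E)
    (hx : (v, x) ∈ D.E) : X u * X v ^ D.w v * X x ^ D.w x ∉ D.edgeIdeal K ^ 2 := by
  rw [X_mul_X_pow_eq_monomial, X_pow_eq_monomial, monomial_mul, one_mul,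
    monomial_mem_edgeIdeal_sq_iff]
  rintro ⟨e, he, e', he', hle⟩
  exact D.not_edgeExponent_add_le hu hx he he' hle

end WOGraph

theorem iInf_sq_not_le_edgeIdeal_sq_general {s m : ℕ} (K : Type*) [Field K] (D : WOGraph s)
    (α : Fin m → (Fin s → ℕ))
    (hdec : D.edgeIdeal K = ⨅ i, irredIdeal K (α i))
    (v : Fin s) (hv : v ∈ D.Vplus)
    (hin : ∃ u, (u, v) ∈ D.E) (hout : ∃ x, (v, x) ∈ D.E) :
    ¬ (⨅ i, irredIdeal K (α i) ^ 2) ≤ D.edgeIdeal K ^ 2 := by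
  obtain ⟨u, hu⟩ := hin
  obtain ⟨x, hx⟩ := hout
  intro hle
  refine D.X_mul_X_pow_mul_X_pow_notMem_edgeIdeal_sq K hu hx (hle ?_)
  refine Submodule.mem_iInf _ |>.mpr fun i => ?_
  exact D.X_mul_X_pow_mul_X_pow_mem_irredIdeal_sq K (hdec ▸ iInf_le _ i) hu hx hv

/-- **Lemma.** Let `D` be a weighted oriented graph and let
`I(D) = q_{α_1} ∩ ⋯ ∩ q_{α_m}` be the (irredundant) irreducible decomposition of its
edge ideal. If some vertex `v ∈ V⁺(D)` is neither a source nor a sink (it has both an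
incoming and an outgoing edge), then `⋂_{i=1}^m q_{α_i}²` is not contained in `I(D)²`. -/
theorem iInf_sq_not_le_edgeIdeal_sq {s m : ℕ} (K : Type*) [Field K] (D : WOGraph s)
    (α : Fin m → (Fin s → ℕ)) (hα : ∀ i, α i ≠ 0)
    (hdec : D.edgeIdeal K = ⨅ i, irredIdeal K (α i))
    (hirr : ∀ j : Fin m,
      D.edgeIdeal K ≠ ⨅ i ∈ ({j}ᶜ : Set (Fin m)), irredIdeal K (α i))
    (v : Fin s) (hv : v ∈ D.Vplus)
    (hin : ∃ u, (u, v) ∈ D.E) (hout : ∃ x, (v, x) ∈ D.E) :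
    ¬ (⨅ i, irredIdeal K (α i) ^ 2) ≤ D.edgeIdeal K ^ 2 :=
  iInf_sq_not_le_edgeIdeal_sq_general K D α hdec v hv hin hout
end

section
/- Let I be a monomial ideal of S = K[t_1,…,t_s] with a minimal irreducible decomposition I = q_{α_1} ∩ ⋯ ∩ q_{α_m}. If I^n = I^{(n)} for all n ≥ 1, then for all n ≥ 1 the integral closure of I^n equals the intersection of the integral closures of the q_{α_i}^n, i.e., \overline{I^n} = \overline{q_{α_1}^n} ∩ ⋯ ∩ \overline{q_{α_m}^n}. -/
/-!
At a minimal prime `p` of `I = q₁ ∩ ⋯ ∩ qₘ` exactly one `qᵢ` lies in `p`, because the radicals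
of the `qᵢ` are pairwise distinct primes containing `I`. Localizing at `p` therefore turns `I`
into that `qᵢ`, whence `q₁ᴺ ∩ ⋯ ∩ qₘᴺ ⊆ I^(N) = Iᴺ`. If a monomial `tᵃ` lies in the integral
closure of every `qᵢⁿ`, then `(tᵃ)^{pᵢ} ∈ qᵢ^{n pᵢ}` for some `pᵢ ≥ 1`, so with `P = ∏ pᵢ` the
power `(tᵃ)^P` lies in `⋂ qᵢ^{nP} ⊆ I^{nP}`.
-/

open MvPolynomial Pointwise

/-- The integral closure of a monomial ideal `J`:
the ideal `({t^a : (t^a)^p ∈ J^p for some integer p ≥ 1})`. -/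
noncomputable def monIntegralClosure {s : ℕ} (K : Type*) [Field K]
    (J : Ideal (MvPolynomial (Fin s) K)) : Ideal (MvPolynomial (Fin s) K) :=
  Ideal.span { f | ∃ a : Fin s →₀ ℕ, f = monomial a (1 : K) ∧
    ∃ p : ℕ, 1 ≤ p ∧ (monomial a (1 : K)) ^ p ∈ J ^ p }

lemma MvPolynomial.isPrime_span_X_image_s5 {σ R : Type*} [CommRing R] [IsDomain R] (T : Set σ) :
    (Ideal.span (X '' T : Set (MvPolynomial σ R))).IsPrime := by
  classical
  set J := Ideal.span (X '' T : Set (MvPolynomial σ R))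
  -- `φ` kills the variables in `T` and is the identity modulo `J`, so its kernel is `J`.
  let φ : MvPolynomial σ R →ₐ[R] MvPolynomial σ R := aeval fun i => if i ∈ T then 0 else X i
  have hφ : (Ideal.Quotient.mkₐ R J).comp φ = Ideal.Quotient.mkₐ R J := by
    refine algHom_ext fun i => ?_
    by_cases hi : i ∈ T
    · simpa [φ, hi, eq_comm (a := (0 : MvPolynomial σ R ⧸ J)), Ideal.Quotient.eq_zero_iff_mem]
        using (Ideal.subset_span ⟨i, hi, rfl⟩ : X i ∈ J)
    · simp [φ, hi]
  suffices RingHom.ker φ = J from this ▸ RingHom.ker_isPrime φ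
  refine le_antisymm (fun f hf => ?_) (Ideal.span_le.2 ?_)
  · rw [← Ideal.Quotient.eq_zero_iff_mem, ← Ideal.Quotient.mkₐ_eq_mk R, ← hφ,
      AlgHom.comp_apply, RingHom.mem_ker.1 hf, map_zero]
  · rintro _ ⟨i, hi, rfl⟩
    simp [φ, hi]

lemma radical_irredIdeal {s : ℕ} (K : Type*) [Field K] (b : Fin s → ℕ) :
    (irredIdeal K b).radical = Ideal.span (X '' {i | 1 ≤ b i}) := by
  refine le_antisymm ?_ (Ideal.span_le.2 ?_)
  · rw [← (isPrime_span_X_image_s5 _).radical]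
    refine Ideal.radical_mono (Ideal.span_le.2 ?_)
    rintro _ ⟨i, hi, rfl⟩
    have hX : X i ∈ Ideal.span (X '' {i | 1 ≤ b i} : Set (MvPolynomial (Fin s) K)) :=
      Ideal.subset_span ⟨i, hi, rfl⟩
    exact Ideal.pow_mem_of_mem _ hX _ hi
  · rintro _ ⟨i, hi, rfl⟩
    exact ⟨b i, Ideal.subset_span ⟨i, hi, rfl⟩⟩

lemma isPrime_radical_irredIdeal {s : ℕ} (K : Type*) [Field K] (b : Fin s → ℕ) :
    (irredIdeal K b).radical.IsPrime :=
  radical_irredIdeal K b ▸ isPrime_span_X_image_s5 _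

section SymbolicPower

variable {R ι : Type*} [CommRing R] [Fintype ι]

lemma map_prod_eq_map_of_forall_not_le {p : Ideal R} [p.IsPrime] (q : ι → Ideal R) (i₀ : ι)
    (h : ∀ j ≠ i₀, ¬ q j ≤ p) :
    (∏ i, q i).map (algebraMap R (Localization.AtPrime p)) =
      (q i₀).map (algebraMap R (Localization.AtPrime p)) := by
  rw [← Ideal.mapHom_apply, map_prod, Finset.prod_eq_single i₀]
  · rfl
  · intro j _ hj
    exact (IsLocalization.AtPrime.map_eq_top_of_not_le _ (h j hj)).trans Ideal.one_eq_top.symm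
  · simp

lemma iInf_pow_le_symbolicPower (q : ι → Ideal R) (hq : ∀ i, (q i).radical.IsPrime)
    (hrad : Pairwise fun i j => (q i).radical ≠ (q j).radical) (N : ℕ) :
    ⨅ i, q i ^ N ≤ symbolicPower (⨅ i, q i) N := by
  refine le_iInf₂ fun p hp => ?_
  have : p.IsPrime := hp.1.1
  have hprod : ∏ i, q i ≤ ⨅ i, q i := Ideal.prod_le_inf.trans_eq (Finset.inf_univ_eq_iInf _)
  obtain ⟨i₀, -, hi₀⟩ := (Ideal.IsPrime.prod_le this).1 (hprod.trans hp.1.2)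
  have hradical_eq : ∀ j, q j ≤ p → (q j).radical = p := fun j hj =>
    le_antisymm (this.radical_le_iff.2 hj)
      (hp.2 ⟨hq j, (iInf_le q j).trans Ideal.le_radical⟩ (this.radical_le_iff.2 hj))
  have hi₀_unique : ∀ j ≠ i₀, ¬ q j ≤ p := fun j hj hjp =>
    hrad hj ((hradical_eq j hjp).trans (hradical_eq i₀ hi₀).symm)
  have hmap : (q i₀).map (algebraMap R (Localization.AtPrime p)) ≤
      (⨅ i, q i).map (algebraMap R (Localization.AtPrime p)) :=
    map_prod_eq_map_of_forall_not_le q i₀ hi₀_unique ▸ Ideal.map_mono hprod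
  intro x hx
  have hx₀ := Ideal.mem_map_of_mem (algebraMap R (Localization.AtPrime p))
    (iInf_le (fun i => q i ^ N) i₀ hx)
  rw [Ideal.map_pow] at hx₀
  simpa only [contractAt, Ideal.mem_comap, Ideal.map_pow] using Ideal.pow_right_mono hmap N hx₀

end SymbolicPower

lemma Ideal.pow_mem_pow_of_dvd {R : Type*} [CommSemiring R] {J : Ideal R} {y z : R} {p P : ℕ}
    (h : y ^ p ∈ J ^ p) (hyz : y ∣ z) (hpP : p ∣ P) : z ^ P ∈ J ^ P := by
  obtain ⟨c, rfl⟩ := hyz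
  obtain ⟨k, rfl⟩ := hpP
  rw [pow_mul, pow_mul, mul_pow]
  exact Ideal.pow_mem_pow (Ideal.mul_mem_right _ _ h) k

section MonomialIntegralClosure

variable {s : ℕ} {K : Type*} [Field K]

lemma mem_monIntegralClosure_iff {J : Ideal (MvPolynomial (Fin s) K)}
    {f : MvPolynomial (Fin s) K} :
    f ∈ monIntegralClosure K J ↔
      ∀ x ∈ f.support, ∃ p, 1 ≤ p ∧ monomial x (1 : K) ^ p ∈ J ^ p := by
  have hspan : monIntegralClosure K J = Ideal.span ((monomial · (1 : K)) ''
      {a | ∃ p, 1 ≤ p ∧ monomial a (1 : K) ^ p ∈ J ^ p}) := by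
    unfold monIntegralClosure
    congr 1
    ext f
    simp only [Set.mem_image, eq_comm (b := f)]
    exact exists_congr fun _ => and_comm
  rw [hspan, mem_ideal_span_monomial_image]
  refine forall₂_congr fun x _ =>
    ⟨fun ⟨a, ⟨p, hp, ha⟩, hax⟩ => ⟨p, hp, ?_⟩, fun h => ⟨x, h, le_rfl⟩⟩
  exact Ideal.pow_mem_pow_of_dvd ha (monomial_dvd_monomial.2 ⟨Or.inr hax, dvd_rfl⟩) dvd_rfl

lemma monIntegralClosure_mono {J L : Ideal (MvPolynomial (Fin s) K)} (h : J ≤ L) :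
    monIntegralClosure K J ≤ monIntegralClosure K L :=
  Ideal.span_mono fun _ ⟨a, hf, p, hp, ha⟩ => ⟨a, hf, p, hp, Ideal.pow_right_mono h p ha⟩

lemma iInf_monIntegralClosure_le {ι : Type*} [Fintype ι] (J : ι → Ideal (MvPolynomial (Fin s) K))
    (L : Ideal (MvPolynomial (Fin s) K)) (h : ∀ N, 1 ≤ N → ⨅ i, J i ^ N ≤ L ^ N) :
    ⨅ i, monIntegralClosure K (J i) ≤ monIntegralClosure K L := by
  intro f hf
  refine mem_monIntegralClosure_iff.2 fun x hx => ?_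
  choose p hp₁ hp using fun i => mem_monIntegralClosure_iff.1 (Submodule.mem_iInf _ |>.1 hf i) x hx
  have hP : 1 ≤ ∏ i, p i := Finset.one_le_prod' fun i _ => hp₁ i
  refine ⟨∏ i, p i, hP, h _ hP (Submodule.mem_iInf _ |>.2 fun i => ?_)⟩
  exact Ideal.pow_mem_pow_of_dvd (hp i) dvd_rfl (Finset.dvd_prod_of_mem p (Finset.mem_univ i))

end MonomialIntegralClosure

theorem integralClosure_pow_eq_iInf_general {s m : ℕ} (K : Type*) [Field K]
    (I : Ideal (MvPolynomial (Fin s) K))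
    (α : Fin m → (Fin s → ℕ))
    (hdec : I = ⨅ i, irredIdeal K (α i))
    (hminrad : ∀ i j : Fin m, i ≠ j →
      (irredIdeal K (α i)).radical ≠ (irredIdeal K (α j)).radical)
    (hsym : ∀ n : ℕ, 1 ≤ n → I ^ n = symbolicPower I n) :
    ∀ n : ℕ, 1 ≤ n →
      monIntegralClosure K (I ^ n) = ⨅ i, monIntegralClosure K (irredIdeal K (α i) ^ n) := by
  intro n hn
  refine le_antisymm (le_iInf fun i => monIntegralClosure_mono (Ideal.pow_right_mono ?_ n))
    (iInf_monIntegralClosure_le _ _ fun N hN => ?_)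
  · exact hdec ▸ iInf_le _ i
  · simp_rw [← pow_mul]
    rw [hsym _ (Nat.mul_pos hn hN), hdec]
    exact iInf_pow_le_symbolicPower _ (fun i => isPrime_radical_irredIdeal K (α i))
      (fun i j => hminrad i j) _

/-- **Theorem (integral closures).** Let `I` be a monomial ideal of `S = K[t_1,…,t_s]`
with a minimal irreducible decomposition `I = q_{α_1} ∩ ⋯ ∩ q_{α_m}` (irredundant, with
pairwise distinct radicals). If `Iⁿ = I^{(n)}` for all `n ≥ 1`, then
`closure(Iⁿ) = closure(q_{α_1}ⁿ) ∩ ⋯ ∩ closure(q_{α_m}ⁿ)` for all `n ≥ 1`. -/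
theorem integralClosure_pow_eq_iInf {s m : ℕ} (K : Type*) [Field K]
    (I : Ideal (MvPolynomial (Fin s) K))
    (α : Fin m → (Fin s → ℕ)) (hα : ∀ i, α i ≠ 0)
    (hdec : I = ⨅ i, irredIdeal K (α i))
    (hirr : ∀ j : Fin m, I ≠ ⨅ i ∈ ({j}ᶜ : Set (Fin m)), irredIdeal K (α i))
    (hminrad : ∀ i j : Fin m, i ≠ j →
      (irredIdeal K (α i)).radical ≠ (irredIdeal K (α j)).radical)
    (hsym : ∀ n : ℕ, 1 ≤ n → I ^ n = symbolicPower I n) :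
    ∀ n : ℕ, 1 ≤ n →
      monIntegralClosure K (I ^ n) = ⨅ i, monIntegralClosure K (irredIdeal K (α i) ^ n) :=
  integralClosure_pow_eq_iInf_general K I α hdec hminrad hsym
end

section
/- Let I be an ideal of the polynomial ring S = K[t_1,…,t_s] over a field K. Then I^n = I^{(n)} for all n ≥ 1 if and only if I has no embedded primes and Ass(I^n) = Ass(I) for all n ≥ 1. -/
open MvPolynomial Pointwise

/-- The set `Ass(I)` of associated primes of `I`: the prime ideals of the form
`(I : f)` for some `f ∈ S`. -/
def assPrimes {R : Type*} [CommRing R] (I : Ideal R) : Set (Ideal R) :=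
  { p | p.IsPrime ∧ ∃ f : R, p = Submodule.colon I (Ideal.span {f}) }

/-! For a minimal prime `p` of `J`, the contraction `J R_p ∩ R` is `p`-primary (its extension to
`R_p` has the maximal ideal as radical). So `J^{(1)} = ⨅_{p ∈ Min J} (J R_p ∩ R)` is an intersection
of primary ideals, whose associated primes are among their radicals `Min J`; conversely, for
`x ∈ J^{(1)} \ J` an associated prime of `J` containing `(J : x)` cannot be minimal. Hence
`J^{(1)} = J` iff `Ass J = Min J`. As `Iⁿ` and `I` have the same minimal primes,
`I^{(n)} = (Iⁿ)^{(1)}`, so `Iⁿ = I^{(n)}` iff `Ass Iⁿ = Min I`; and `Ass I = Min I` says exactly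
that `I` has no embedded primes, since minimal primes are always associated. -/

section

variable {R : Type*} [CommRing R]

section contractAt

variable {J p : Ideal R}

lemma mem_contractAt (hp : p.IsPrime) {x : R} :
    x ∈ contractAt J p hp ↔ ∃ u ∉ p, u * x ∈ J :=
  IsLocalization.algebraMap_mem_map_algebraMap_iff p.primeCompl _ J x

lemma le_contractAt (hp : p.IsPrime) : J ≤ contractAt J p hp :=
  Ideal.le_comap_map

lemma radical_contractAt (hp : p ∈ J.minimalPrimes) : (contractAt J p hp.1.1).radical = p := by
  have := hp.1.1
  rw [contractAt, ← Ideal.comap_radical,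
    IsLocalization.AtPrime.radical_map_of_mem_minimalPrimes (Localization.AtPrime p) p J hp,
    Localization.AtPrime.map_eq_maximalIdeal]
  exact Localization.AtPrime.under_maximalIdeal

lemma isPrimary_contractAt (hp : p ∈ J.minimalPrimes) : (contractAt J p hp.1.1).IsPrimary := by
  have := hp.1.1
  refine Ideal.IsPrimary.comap (Ideal.isPrimary_of_isMaximal_radical ?_) _
  rw [IsLocalization.AtPrime.radical_map_of_mem_minimalPrimes (Localization.AtPrime p) p J hp,
    Localization.AtPrime.map_eq_maximalIdeal]
  infer_instance

end contractAt

section assPrimes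

variable {J p : Ideal R}

lemma le_of_mem_assPrimes (hp : p ∈ assPrimes J) : J ≤ p := by
  obtain ⟨-, f, rfl⟩ := hp
  exact fun a ha => Ideal.mem_colon_span_singleton.2 (J.mul_mem_right f ha)

lemma bot_colon_singleton_mk (J : Ideal R) (f : R) :
    (⊥ : Submodule R (R ⧸ J)).colon {Ideal.Quotient.mk J f}
      = Submodule.colon J (Ideal.span {f}) := by
  ext a
  rw [Submodule.mem_colon_singleton, Submodule.mem_bot, Ideal.mem_colon_span_singleton,
    Algebra.smul_def, Ideal.Quotient.algebraMap_eq, ← map_mul, Ideal.Quotient.eq_zero_iff_mem]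

lemma assPrimes_eq_associatedPrimes [IsNoetherianRing R] (J : Ideal R) :
    assPrimes J = associatedPrimes R (R ⧸ J) := by
  ext p
  simp only [assPrimes, Set.mem_ofPred_eq, AssociatedPrimes.mem_iff, isAssociatedPrime_iff,
    Ideal.Quotient.mk_surjective.exists, bot_colon_singleton_mk]

lemma minimalPrimes_subset_assPrimes [IsNoetherianRing R] (J : Ideal R) :
    J.minimalPrimes ⊆ assPrimes J := by
  rw [assPrimes_eq_associatedPrimes]
  simpa only [Ideal.annihilator_quotient] using
    Module.associatedPrimes.minimalPrimes_annihilator_subset_associatedPrimes R (R ⧸ J)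

lemma exists_mem_assPrimes_colon_le [IsNoetherianRing R] {x : R} (hx : x ∉ J) :
    ∃ p ∈ assPrimes J, Submodule.colon J (Ideal.span {x}) ≤ p := by
  rw [assPrimes_eq_associatedPrimes, ← bot_colon_singleton_mk]
  exact exists_le_isAssociatedPrime_of_isNoetherianRing R _
    (by rwa [Ne, Ideal.Quotient.eq_zero_iff_mem])

lemma exists_eq_radical_of_mem_assPrimes_iInf {ι : Type*} [Finite ι] {Q : ι → Ideal R}
    (hQ : ∀ i, (Q i).IsPrimary) (hp : p ∈ assPrimes (⨅ i, Q i)) : ∃ i, p = (Q i).radical := by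
  have := Fintype.ofFinite ι
  obtain ⟨hpp, f, hpf⟩ := hp
  -- prime avoidance, applied to `(⨅ i, Q i : f) = ⨅ i, (Q i : f) ≤ p`
  obtain ⟨i, -, hip⟩ : ∃ i ∈ Finset.univ, Submodule.colon (Q i) (Ideal.span {f}) ≤ p := by
    rw [← hpp.inf_le', Finset.inf_univ_eq_iInf, ← Submodule.iInf_colon, hpf]
  have hpi : p = Submodule.colon (Q i) (Ideal.span {f}) :=
    le_antisymm (hpf ▸ Submodule.colon_mono (iInf_le Q i) le_rfl) hip
  have hfi : f ∉ Q i := fun hf =>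
    hpp.ne_top (hpi ▸ (Ideal.eq_top_iff_one _).2 (Ideal.mem_colon_span_singleton.2 (by simpa)))
  refine ⟨i, le_antisymm (fun a ha => ?_) (hpp.radical_le_iff.2 ?_)⟩
  · rw [hpi, Ideal.mem_colon_span_singleton] at ha
    exact ((Ideal.isPrimary_iff.1 (hQ i)).2 (mul_comm a f ▸ ha)).resolve_left hfi
  · exact le_of_mem_assPrimes ⟨hpp, f, hpi⟩

lemma assPrimes_eq_minimalPrimes_iff [IsNoetherianRing R] (J : Ideal R) :
    assPrimes J = J.minimalPrimes ↔ ¬ ∃ p ∈ assPrimes J, ∃ q ∈ assPrimes J, q < p := by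
  refine ⟨?_, fun h => (Set.Subset.antisymm ?_ (minimalPrimes_subset_assPrimes J))⟩
  · rintro hJ ⟨p, hp, q, hq, hqp⟩
    rw [hJ] at hp hq
    exact hqp.not_ge (hp.2 hq.1 hqp.le)
  · intro p hp
    have := hp.1
    obtain ⟨q, hq, hqp⟩ := Ideal.exists_minimalPrimes_le (le_of_mem_assPrimes hp)
    obtain rfl | hlt := hqp.eq_or_lt
    · exact hq
    · exact absurd ⟨p, hp, q, minimalPrimes_subset_assPrimes J hq, hlt⟩ h

end assPrimes

lemma minimalPrimes_pow (I : Ideal R) {n : ℕ} (hn : n ≠ 0) :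
    (I ^ n).minimalPrimes = I.minimalPrimes := by
  rw [← Ideal.radical_minimalPrimes, Ideal.radical_pow I hn, Ideal.radical_minimalPrimes]

lemma symbolicPower_one_eq_self_iff [IsNoetherianRing R] (J : Ideal R) :
    symbolicPower J 1 = J ↔ assPrimes J = J.minimalPrimes := by
  simp only [symbolicPower, pow_one]
  refine ⟨fun h => Set.Subset.antisymm (fun p hp => ?_) (minimalPrimes_subset_assPrimes J),
    fun h => le_antisymm (fun x hx => ?_) (le_iInf₂ fun p hp => le_contractAt hp.1.1)⟩
  · have := (J.finite_minimalPrimes_of_isNoetherianRing).to_subtype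
    rw [← h, iInf_subtype'] at hp
    obtain ⟨q, rfl⟩ := exists_eq_radical_of_mem_assPrimes_iInf
      (fun q : J.minimalPrimes => isPrimary_contractAt q.2) hp
    rw [radical_contractAt q.2]
    exact q.2
  · by_contra hxJ
    obtain ⟨p, hp, hxp⟩ := exists_mem_assPrimes_colon_le hxJ
    have hpJ : p ∈ J.minimalPrimes := h ▸ hp
    have hxp' : x ∈ contractAt J p hpJ.1.1 :=
      (Submodule.mem_iInf _).1 ((Submodule.mem_iInf _).1 hx p) hpJ
    obtain ⟨u, hup, hux⟩ := (mem_contractAt hpJ.1.1).1 hxp'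
    exact hup (hxp (Ideal.mem_colon_span_singleton.2 (mul_comm u x ▸ hux)))

lemma symbolicPower_pow_one (I : Ideal R) {n : ℕ} (hn : n ≠ 0) :
    symbolicPower (I ^ n) 1 = symbolicPower I n := by
  simp only [symbolicPower, pow_one, minimalPrimes_pow I hn]

lemma pow_eq_symbolicPower_iff [IsNoetherianRing R] (I : Ideal R) {n : ℕ} (hn : n ≠ 0) :
    I ^ n = symbolicPower I n ↔ assPrimes (I ^ n) = I.minimalPrimes := by
  rw [← symbolicPower_pow_one I hn, eq_comm, symbolicPower_one_eq_self_iff, minimalPrimes_pow I hn]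

end

/-- **Corollary.** Let `I` be an ideal of the polynomial ring `S = K[t_1,…,t_s]`. Then
`Iⁿ = I^{(n)}` for all `n ≥ 1` if and only if `I` has no embedded primes (no associated
prime properly contains another associated prime) and `Ass(Iⁿ) = Ass(I)` for all
`n ≥ 1`. -/
theorem pow_eq_symbolicPower_iff_no_embedded_and_ass_stable {s : ℕ} (K : Type*)
    [Field K] (I : Ideal (MvPolynomial (Fin s) K)) :
    (∀ n : ℕ, 1 ≤ n → I ^ n = symbolicPower I n) ↔
      ((¬ ∃ p ∈ assPrimes I, ∃ q ∈ assPrimes I, q < p) ∧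
        ∀ n : ℕ, 1 ≤ n → assPrimes (I ^ n) = assPrimes I) := by
  rw [← assPrimes_eq_minimalPrimes_iff]
  have key (n : ℕ) (hn : 1 ≤ n) := pow_eq_symbolicPower_iff I (Nat.one_le_iff_ne_zero.1 hn)
  constructor
  · intro H
    have hass (n : ℕ) (hn : 1 ≤ n) : assPrimes (I ^ n) = I.minimalPrimes := (key n hn).1 (H n hn)
    have hass_one : assPrimes I = I.minimalPrimes := by
      simpa only [pow_one] using hass 1 le_rfl
    exact ⟨hass_one, fun n hn => (hass n hn).trans hass_one.symm⟩
  · rintro ⟨hass_one, hstable⟩ n hn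
    exact (key n hn).2 ((hstable n hn).trans hass_one)
end
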